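/- For admissible sequences of words 𝐒₀,…,𝐒_k and μ > 1, define the weights z(𝐒₀,…,𝐒_k) = (e^{−μ|S_k∩S'_{k−1}|}/|(S'_k)₊|)·d_{𝐒_k} ⋯ (e^{−μ|S₁∩S'₀|}/|(S'₁)₊|)·d_{𝐒₁}·(1/|(S'₀)₊|)·v_{𝐒₀}, where d_𝐒 = ||D_𝐒||·e^{μ|S|} and v_𝐒 = ||V⁺_𝐒||·e^{μ|S|}. Set z(k) = sup_α Σ_{admissible 𝐒₀,…,𝐒_k with α∈S'_k} z(𝐒₀,…,𝐒_k) and z_{k,j} = sup_α Σ_{admissible 𝐒₀,…,𝐒_k with α∈S_j} z(𝐒₀,…,𝐒_k). Then for any 0 < j ≤ k, z_{k,j} ≤ z(j−1)·||D||_μ^{k−j+1}, and for j = 0, z_{k,0} ≤ ||D||_μ^k · ||V⁺||_μ. -/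

import Mathlib

open scoped BigOperators
set_option linter.unusedSectionVars false
open Matrix

noncomputable section

namespace QLDPC

open scoped Classical

/-- The four Pauli matrices 1, X, Y, Z. -/
def pauliMat : Fin 4 → Matrix (Fin 2) (Fin 2) ℂ
  | 0 => 1
  | 1 => !![0, 1; 1, 0]
  | 2 => !![0, -Complex.I; Complex.I, 0]
  | 3 => !![1, 0; 0, -1]

variable {Λ E : Type}

/-- Operators on the Hilbert space (ℂ²)^{⊗Λ}. -/
abbrev Op (Λ : Type) [Fintype Λ] [DecidableEq Λ] := Matrix (Λ → Fin 2) (Λ → Fin 2) ℂ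

/-- The operator of a Pauli string `p : Λ → Fin 4`. -/
def pauliOp [Fintype Λ] [DecidableEq Λ] (p : Λ → Fin 4) : Op Λ :=
  fun f g => ∏ x, pauliMat (p x) (f x) (g x)

/-- Qubit support of a Pauli string. -/
def psupp [Fintype Λ] (p : Λ → Fin 4) : Finset Λ :=
  Finset.univ.filter fun x => p x ≠ 0

/-- The operator norm (largest singular value). -/
def opNorm [Fintype Λ] [DecidableEq Λ] (A : Op Λ) : ℝ :=
  ‖Matrix.toEuclideanCLM (𝕜 := ℂ) A‖

/-- Coefficient of the Pauli string `p` in the Pauli-basis expansion of `A`. -/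
def pauliCoeff [Fintype Λ] [DecidableEq Λ] (A : Op Λ) (p : Λ → Fin 4) : ℂ :=
  Matrix.trace (pauliOp p * A) / ((2 : ℂ) ^ Fintype.card Λ)

/-- Qubit support of a general operator, via its Pauli expansion. -/
def opSupp [Fintype Λ] [DecidableEq Λ] (A : Op Λ) : Set Λ :=
  {x | ∃ p : Λ → Fin 4, pauliCoeff A p ≠ 0 ∧ p x ≠ 0}

/-- The data of a family of stabilizer checks: each check is a signed Pauli string. -/
structure Checks (Λ E : Type) where
  str : E → Λ → Fin 4
  sgn : E → Bool

variable [Fintype Λ] [DecidableEq Λ] [Fintype E]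

/-- The operator of check α. -/
def checkOp (K : Checks Λ E) (α : E) : Op Λ :=
  (if K.sgn α then (-1 : ℂ) else 1) • pauliOp (K.str α)

/-- G_α = (1 + C_α)/2. -/
def Gop (K : Checks Λ E) (α : E) : Op Λ := (2⁻¹ : ℂ) • (1 + checkOp K α)

/-- E_α = (1 - C_α)/2. -/
def Eop (K : Checks Λ E) (α : E) : Op Λ := (2⁻¹ : ℂ) • (1 - checkOp K α)

/-- The stabilizer Hamiltonian H₀ = Σ_α E_α. -/
def H0 (K : Checks Λ E) : Op Λ := ∑ α, Eop K α

/-- The stabilizer group 𝒢 generated by the checks (as a submonoid; each check squares to 1). -/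
def stab (K : Checks Λ E) : Submonoid (Op Λ) :=
  Submonoid.closure (Set.range (checkOp K))

/-- All checks pairwise commute (𝒢 abelian). -/
def CommChecks (K : Checks Λ E) : Prop := ∀ α β, Commute (checkOp K α) (checkOp K β)

/-- Check support of a qubit. -/
def suppC (K : Checks Λ E) (x : Λ) : Finset E :=
  Finset.univ.filter fun α => x ∈ psupp (K.str α)

/-- The qubit interaction graph. -/
def qubitGraph (K : Checks Λ E) : SimpleGraph Λ :=
  SimpleGraph.fromRel fun x y => ∃ α, x ∈ psupp (K.str α) ∧ y ∈ psupp (K.str α)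

/-- The check interaction graph. -/
def checkGraph (K : Checks Λ E) : SimpleGraph E :=
  SimpleGraph.fromRel fun α β => (psupp (K.str α) ∩ psupp (K.str β)).Nonempty

/-- `y` lies in the (closed) ball of radius `r` around `x` in the graph `G`. -/
def inBall {V : Type} (G : SimpleGraph V) (x y : V) (r : ℝ) : Prop :=
  G.Reachable x y ∧ (G.dist x y : ℝ) ≤ r

/-- Ball in the qubit graph. -/
def ballQ (K : Checks Λ E) (x : Λ) (r : ℝ) : Finset Λ :=
  Finset.univ.filter fun y => inBall (qubitGraph K) x y r

/-- Ball in the check graph. -/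
def ballC (K : Checks Λ E) (α : E) (r : ℝ) : Finset E :=
  Finset.univ.filter fun β => inBall (checkGraph K) α β r

/-- Ball of radius `r` around a set of checks. -/
def ballCS (K : Checks Λ E) (S : Finset E) (r : ℝ) : Finset E :=
  Finset.univ.filter fun β => ∃ α ∈ S, inBall (checkGraph K) α β r

/-- Growth of balls condition: |B_r| ≤ e^{κ r} on both graphs. -/
def BallGrowth (K : Checks Λ E) (κ : ℝ) : Prop :=
  (∀ (x : Λ) (r : ℝ), ((ballQ K x r).card : ℝ) ≤ Real.exp (κ * r)) ∧
  (∀ (α : E) (r : ℝ), ((ballC K α r).card : ℝ) ≤ Real.exp (κ * r))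

/-- A finite set is connected in a graph if the induced subgraph is connected. -/
def ConnIn {V : Type} (G : SimpleGraph V) (S : Finset V) : Prop :=
  (G.induce (S : Set V)).Connected

/-- Qubit support of a set of checks. -/
def suppSet (K : Checks Λ E) (S : Finset E) : Set Λ :=
  ↑(S.biUnion fun α => psupp (K.str α))

variable [LinearOrder E]

/-- Ordered product of operators over a finite set of check labels. -/
def ordProd (S : Finset E) (f : E → Op Λ) : Op Λ :=
  ((S.sort (· ≤ ·)).map f).prod

/-- The codespace projector P = ∏_α G_α (for commuting checks). -/
def Pmat (K : Checks Λ E) : Op Λ := ordProd Finset.univ (Gop K)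

/-- The code distance: minimal support of a Pauli string p with P p P not proportional to P. -/
def codeDist (K : Checks Λ E) : ℕ :=
  sInf ((fun p => (psupp p).card) ''
    {p : Λ → Fin 4 | ¬∃ cc : ℂ, Pmat K * pauliOp p * Pmat K = cc • Pmat K})

/-- TQO-I: Pauli strings of weight below the code distance commuting with 𝒢 belong to 𝒢. -/
def TQO1 (K : Checks Λ E) : Prop :=
  ∀ p : Λ → Fin 4, (psupp p).card < codeDist K →
    (∀ g ∈ stab K, Commute (pauliOp p) g) → pauliOp p ∈ stab K

/-- TQO-II: group elements locally supported on a small connected check set S are generated by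
checks within distance ℓ|S| of S. -/
def TQO2 (K : Checks Λ E) (ℓ dtil : ℝ) : Prop :=
  ∀ S : Finset E, ConnIn (checkGraph K) S → (S.card : ℝ) < dtil →
    ∀ g ∈ stab K, opSupp (g : Op Λ) ⊆ suppSet K S →
      (g : Op Λ) ∈ Submonoid.closure (checkOp K '' {α | ∃ β ∈ S, inBall (checkGraph K) β α (ℓ * S.card)})

/-! ### Words and operator-collections -/

/-- A word: a quadruple of pairwise disjoint subsets of the checks,
labelled (+, -, excited, ground). -/
structure Word (E : Type) where
  p : Finset E
  m : Finset E
  e : Finset E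
  g : Finset E
  hpm : Disjoint p m
  hpe : Disjoint p e
  hpg : Disjoint p g
  hme : Disjoint m e
  hmg : Disjoint m g
  heg : Disjoint e g

/-- The underlying set of the word. -/
def Word.S [DecidableEq E] (w : Word E) : Finset E := w.p ∪ w.m ∪ w.e ∪ w.g

instance : Fintype (Word E) := by
  classical
  exact Fintype.ofInjective (fun w : Word E => (w.p, w.m, w.e, w.g))
    (by
      rintro ⟨a1, a2, a3, a4, _, _, _, _, _, _⟩ ⟨b1, b2, b3, b4, _, _, _, _, _, _⟩ h
      simp only [Prod.mk.injEq] at h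
      obtain ⟨h1, h2, h3, h4⟩ := h
      subst h1; subst h2; subst h3; subst h4; rfl)

/-- A word is a ghost if all components except the ground one are empty. -/
def IsGhost (w : Word E) : Prop := w.p = ∅ ∧ w.m = ∅ ∧ w.e = ∅

/-- The empty word. -/
def emptyWord (E : Type) : Word E :=
  ⟨∅, ∅, ∅, ∅, by simp, by simp, by simp, by simp, by simp, by simp⟩

/-- Left projector assignment of a word. -/
def leftP (K : Checks Λ E) (w : Word E) (α : E) : Op Λ :=
  if α ∈ w.m ∪ w.g then Gop K α else Eop K α

/-- Right projector assignment of a word. -/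
def rightP (K : Checks Λ E) (w : Word E) (α : E) : Op Λ :=
  if α ∈ w.p ∪ w.g then Gop K α else Eop K α

/-- The class 𝒳_𝐒 of operators compatible with the word 𝐒. -/
def memClass (K : Checks Λ E) (w : Word E) (X : Op Λ) : Prop :=
  ∃ Y : Op Λ,
    (∀ α : E, (opSupp Y ∩ (psupp (K.str α) : Set Λ)).Nonempty → α ∈ w.S) ∧
    X = ordProd w.S (leftP K w) * Y * ordProd w.S (rightP K w)

/-- An operator-collection: a family (O_𝐒)_𝐒 with O_𝐒 ∈ 𝒳_𝐒. -/
def IsColl (K : Checks Λ E) (O : Word E → Op Λ) : Prop :=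
  ∀ w, memClass K w (O w)

/-- The intensive word norm ‖O‖_μ of an operator-collection. -/
def wordNorm (μ : ℝ) (O : Word E → Op Λ) : ℝ :=
  ⨆ α : E, ∑ w : Word E, (if α ∈ w.S then opNorm (O w) * Real.exp (μ * w.S.card) else 0)

/-! ### The multiplication table of words -/

/-- Labels of a check in a word: none, ground, excited, raising, lowering. -/
inductive Lbl | N | G | E | P | M
deriving DecidableEq

/-- The multiplication table of labels; `none` encodes that the product vanishes. -/
def lblMul : Lbl → Lbl → Option Lbl
  | .N, x => some x
  | .G, .N => some .G
  | .G, .G => some .G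
  | .G, .E => none
  | .G, .P => none
  | .G, .M => some .M
  | .E, .N => some .E
  | .E, .G => none
  | .E, .E => some .E
  | .E, .P => some .P
  | .E, .M => none
  | .P, .N => some .P
  | .P, .G => some .P
  | .P, .E => none
  | .P, .P => none
  | .P, .M => some .E
  | .M, .N => some .M
  | .M, .G => none
  | .M, .E => some .M
  | .M, .P => some .G
  | .M, .M => none

/-- The label of a check in a word. -/
def Word.lbl [DecidableEq E] (w : Word E) (α : E) : Lbl :=
  if α ∈ w.p then .P else if α ∈ w.m then .M else if α ∈ w.e then .E
  else if α ∈ w.g then .G else .N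

/-- The product of two words is defined (the corresponding operator product does not vanish
identically by the multiplication table). -/
def MulDef (w' w : Word E) : Prop :=
  ∀ α : E, lblMul (w'.lbl α) (w.lbl α) ≠ none

private lemma disj_aux {f : E → Option Lbl} {a b : Lbl} (hab : a ≠ b) :
    Disjoint (Finset.univ.filter fun α => f α = some a)
      (Finset.univ.filter fun α => f α = some b) := by
  rw [Finset.disjoint_left]
  intro x hx hy
  simp only [Finset.mem_filter] at hx hy
  exact hab (Option.some.inj (hx.2.symm.trans hy.2))

/-- The product word 𝐒'𝐒 (meaningful when `MulDef w' w`). -/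
def wmul (w' w : Word E) : Word E where
  p := Finset.univ.filter fun α => lblMul (w'.lbl α) (w.lbl α) = some .P
  m := Finset.univ.filter fun α => lblMul (w'.lbl α) (w.lbl α) = some .M
  e := Finset.univ.filter fun α => lblMul (w'.lbl α) (w.lbl α) = some .E
  g := Finset.univ.filter fun α => lblMul (w'.lbl α) (w.lbl α) = some .G
  hpm := disj_aux (by decide)
  hpe := disj_aux (by decide)
  hpg := disj_aux (by decide)
  hme := disj_aux (by decide)
  hmg := disj_aux (by decide)
  heg := disj_aux (by decide)

/-- The commutator of two operator-collections. -/
def collComm (O O' : Word E → Op Λ) : Word E → Op Λ := fun w =>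
  ∑ w1 : Word E, ∑ w2 : Word E,
    if MulDef w1 w2 ∧ wmul w1 w2 = w ∧ (w1.S ∩ w2.S).Nonempty
    then O w1 * O' w2 - O' w1 * O w2 else 0

/-- Iterated adjoint action ad_{B_k}⋯ad_{B_1}(B_0) of operator-collections. -/
def chainAd (B : ℕ → Word E → Op Λ) : ℕ → Word E → Op Λ
  | 0 => B 0
  | k + 1 => collComm (B (k + 1)) (chainAd B k)

/-- exp(i ad_A)(B) for operator-collections, defined componentwise. -/
def expAd (A B : Word E → Op Λ) : Word E → Op Λ := fun w =>
  ∑' k : ℕ, ((Complex.I ^ k / (k.factorial : ℂ)) • ((fun C => collComm A C)^[k] B) w)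

/-! ### Sequences of words -/

/-- The running products 𝐒'_i of a sequence of words. -/
def sprime (σ : ℕ → Word E) : ℕ → Word E
  | 0 => σ 0
  | i + 1 => wmul (σ (i + 1)) (sprime σ i)

/-- The running products with ghost words skipped. -/
def sprimeG (σ : ℕ → Word E) : ℕ → Word E
  | 0 => σ 0
  | i + 1 => if IsGhost (σ (i + 1)) then sprimeG σ i else wmul (σ (i + 1)) (sprimeG σ i)

/-- Extend a finite sequence of words by the empty word. -/
def extend {k : ℕ} (σ : Fin (k + 1) → Word E) : ℕ → Word E :=
  fun i => if h : i < k + 1 then σ ⟨i, h⟩ else emptyWord E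

/-! ### Pauli norms -/

/-- Size of a minimal connected set of qubits containing the support of `p`. -/
def mSize (K : Checks Λ E) (p : Λ → Fin 4) : ℕ :=
  sInf {n | ∃ T : Finset Λ, ConnIn (qubitGraph K) T ∧ psupp p ⊆ T ∧ T.card = n}

/-- The intensive Pauli norm of an operator given by Pauli coefficients `c`. -/
def pauliNormC (K : Checks Λ E) (μ : ℝ) (c : (Λ → Fin 4) → ℂ) : ℝ :=
  ⨆ x : Λ, ∑ p : Λ → Fin 4, (if p x ≠ 0 then ‖c p‖ * Real.exp (μ * (mSize K p : ℝ)) else 0)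

/-- The intensive Pauli norm of an operator. -/
def pauliNormOp (K : Checks Λ E) (μ : ℝ) (A : Op Λ) : ℝ :=
  pauliNormC K μ (pauliCoeff A)

/-- Diameter of the qubit graph. -/
def diam (K : Checks Λ E) : ℕ :=
  Finset.univ.sup fun pr : Λ × Λ => (qubitGraph K).dist pr.1 pr.2

/-- The spectral projector of a Hermitian matrix onto the eigenvalues in [-δ, δ]. -/
def spectralProjLE {n : Type} [Fintype n] [DecidableEq n] {A : Matrix n n ℂ}
    (hA : A.IsHermitian) (δ : ℝ) : Matrix n n ℂ :=
  (hA.eigenvectorUnitary : Matrix n n ℂ) *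
    Matrix.diagonal (fun i => if |hA.eigenvalues i| ≤ δ then (1 : ℂ) else 0) *
    star (hA.eigenvectorUnitary : Matrix n n ℂ)


section Stmt9

variable {Λ E : Type} [Fintype Λ] [DecidableEq Λ] [Fintype E] [LinearOrder E]

/-- Admissibility of a sequence of words `𝐒₀,…,𝐒_k`: all running products `𝐒'_i` are defined,
no `𝐒_i` is a ghost, each `𝐒_i` (for `i ≥ 1`) has `(S_i)_e ∪ (S_i)₋ ≠ ∅`, and each `𝐒'_i`
has `(S'_i)_e = (S'_i)₋ = ∅`. -/
def Adm (σ : ℕ → Word E) (k : ℕ) : Prop :=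
  (∀ i ≤ k, ¬IsGhost (σ i)) ∧
  (∀ i : ℕ, i + 1 ≤ k → MulDef (σ (i + 1)) (sprime σ i)) ∧
  (∀ i : ℕ, 1 ≤ i → i ≤ k → ((σ i).e ∪ (σ i).m).Nonempty) ∧
  (∀ i ≤ k, (sprime σ i).e = ∅ ∧ (sprime σ i).m = ∅)

/-- The weight
`z(𝐒₀,…,𝐒_k) = (e^{−μ|S_k∩S'_{k−1}|}/|(S'_k)₊|) d_{𝐒_k} ⋯ (e^{−μ|S₁∩S'₀|}/|(S'₁)₊|) d_{𝐒₁}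
 (1/|(S'₀)₊|) v_{𝐒₀}` with `d_𝐒 = ‖D_𝐒‖e^{μ|S|}` and `v_𝐒 = ‖V⁺_𝐒‖e^{μ|S|}`. -/
def zw9 (D V : Word E → Op Λ) (μ : ℝ) (σ : ℕ → Word E) (k : ℕ) : ℝ :=
  (1 / (((sprime σ 0).p.card : ℝ))) * (opNorm (V (σ 0)) * Real.exp (μ * ((σ 0).S.card : ℝ))) *
    ∏ i ∈ Finset.range k,
      (Real.exp (-μ * ((((σ (i + 1)).S ∩ (sprime σ i).S).card : ℝ))) /
          (((sprime σ (i + 1)).p.card : ℝ)) *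
        (opNorm (D (σ (i + 1))) * Real.exp (μ * (((σ (i + 1)).S.card : ℝ)))))

/-- `z(k)`: sup over `α` of the sum of weights over admissible sequences with `α ∈ S'_k`. -/
def z9 (D V : Word E → Op Λ) (μ : ℝ) (k : ℕ) : ℝ :=
  ⨆ α : E, ∑ σ : Fin (k + 1) → Word E,
    (if Adm (extend σ) k ∧ α ∈ (sprime (extend σ) k).S then zw9 D V μ (extend σ) k else 0)

/-- `z_{k,j}`: same as `z(k)` but anchored by the condition `α ∈ S_j`. -/
def z9kj (D V : Word E → Op Λ) (μ : ℝ) (k j : ℕ) : ℝ :=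
  ⨆ α : E, ∑ σ : Fin (k + 1) → Word E,
    (if Adm (extend σ) k ∧ α ∈ (extend σ j).S then zw9 D V μ (extend σ) k else 0)

/-! Multiplying the weight of a sequence by `|(S'_k)₊|` undoes its last normalisation. Appending a
word `𝐒_{k+1}` then costs at most `d_{𝐒_{k+1}}`, since `e^{−μ|…|} ≤ 1`; and admissibility anchors
`𝐒_{k+1}` in `(S'_k)₊` (its excited and lowering checks are raising there), so summing over
`𝐒_{k+1}` costs at most `|(S'_k)₊|·‖D‖_μ`, which restores the normalisation. This gives the factor
`‖D‖_μ^{k−j}`. At step `j` itself, `α ∈ S_j` is summed against `‖D‖_μ` while a fixed check of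
`(S_j)_e ∪ (S_j)₋` lies in `S'_{j−1}`, which produces `z(j−1)`; for `j = 0`, summing over
`𝐒₀ ∋ α` gives `‖V⁺‖_μ`. -/

lemma ite_le_ite_of_imp {p q : Prop} [Decidable p] [Decidable q] {a b : ℝ}
    (hpq : p → q) (hab : p → a ≤ b) (hb : 0 ≤ b) :
    (if p then a else 0) ≤ if q then b else 0 := by
  by_cases hp : p
  · rw [if_pos hp, if_pos (hpq hp)]
    exact hab hp
  · rw [if_neg hp]
    exact ite_nonneg hb le_rfl

lemma div_mul_mul_le_of_le_one {a b c : ℝ} (ha : a ≤ 1) (hb : 0 ≤ b) (hc : 0 ≤ c) :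
    a / c * b * c ≤ b := by
  rcases hc.eq_or_lt with rfl | hc
  · simpa using hb
  · rw [div_mul_eq_mul_div, div_mul_cancel₀ _ hc.ne']
    exact mul_le_of_le_one_left hb ha

lemma sum_tuple_snoc {α M : Type*} [Fintype α] [AddCommMonoid M] {n : ℕ}
    (f : (Fin (n + 1) → α) → M) :
    ∑ σ, f σ = ∑ τ : Fin n → α, ∑ a, f (Fin.snoc τ a) := by
  rw [← (Fin.snocEquiv fun _ => α).sum_comp f, Fintype.sum_prod_type, Finset.sum_comm]
  rfl

lemma Word.mem_S_of_mem_p {w : Word E} {β : E} (h : β ∈ w.p) : β ∈ w.S := by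
  simp only [Word.S, Finset.mem_union]
  tauto

lemma Word.mem_S_of_mem_e_union_m {w : Word E} {β : E} (h : β ∈ w.e ∪ w.m) : β ∈ w.S := by
  simp only [Word.S, Finset.mem_union] at h ⊢
  tauto

lemma Word.mem_p_of_lbl_eq_P {w : Word E} {β : E} (h : w.lbl β = .P) : β ∈ w.p := by
  unfold Word.lbl at h
  split_ifs at h with hp
  exact hp

lemma Word.lbl_of_mem_e_union_m {w : Word E} {β : E} (h : β ∈ w.e ∪ w.m) :
    w.lbl β = .E ∨ w.lbl β = .M := by
  have hp : β ∉ w.p := fun hp => (Finset.mem_union.mp h).elim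
    (Finset.disjoint_left.mp w.hpe hp) (Finset.disjoint_left.mp w.hpm hp)
  unfold Word.lbl
  rw [if_neg hp]
  split_ifs <;> simp_all

lemma eq_P_of_lblMul {a b : Lbl} (ha : a = .E ∨ a = .M) (hdef : lblMul a b ≠ none)
    (he : lblMul a b ≠ some .E) (hm : lblMul a b ≠ some .M) : b = .P := by
  rcases ha with rfl | rfl <;> cases b <;> simp_all [lblMul]

/-- In the multiplication table an excited or lowering label survives, or kills the product,
unless it meets a raising label. -/
lemma Word.mem_p_of_mulDef {w s : Word E} (hdef : MulDef w s) (he : (wmul w s).e = ∅)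
    (hm : (wmul w s).m = ∅) {β : E} (hβ : β ∈ w.e ∪ w.m) : β ∈ s.p := by
  refine Word.mem_p_of_lbl_eq_P (eq_P_of_lblMul (Word.lbl_of_mem_e_union_m hβ) (hdef β)
    (fun h => ?_) (fun h => ?_))
  · simpa [he] using (show β ∈ (wmul w s).e by simp [wmul, h])
  · simpa [hm] using (show β ∈ (wmul w s).m by simp [wmul, h])

lemma sprime_congr {σ σ' : ℕ → Word E} {n : ℕ} (h : ∀ i ≤ n, σ i = σ' i) :
    sprime σ n = sprime σ' n := by
  induction n with
  | zero => exact h 0 le_rfl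
  | succ n ih =>
    simp only [sprime]
    rw [h (n + 1) le_rfl, ih fun i hi => h i (hi.trans n.le_succ)]

lemma Adm.congr {σ σ' : ℕ → Word E} {k : ℕ} (h : Adm σ k) (hσ : ∀ i ≤ k, σ i = σ' i) :
    Adm σ' k := by
  obtain ⟨hghost, hdef, hem, hsprime⟩ := h
  have hs : ∀ i ≤ k, sprime σ i = sprime σ' i := fun i hi =>
    sprime_congr fun j hj => hσ j (hj.trans hi)
  refine ⟨fun i hi => hσ i hi ▸ hghost i hi, fun i hi => ?_,
    fun i h1 hi => hσ i hi ▸ hem i h1 hi, fun i hi => hs i hi ▸ hsprime i hi⟩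
  rw [← hσ _ hi, ← hs i (by omega)]
  exact hdef i hi

lemma Adm.of_succ {σ : ℕ → Word E} {k : ℕ} (h : Adm σ (k + 1)) : Adm σ k :=
  ⟨fun i hi => h.1 i (by omega), fun i hi => h.2.1 i (by omega),
    fun i h1 hi => h.2.2.1 i h1 (by omega), fun i hi => h.2.2.2 i (by omega)⟩

lemma Adm.mem_sprime_p {σ : ℕ → Word E} {k : ℕ} (h : Adm σ (k + 1)) {β : E}
    (hβ : β ∈ (σ (k + 1)).e ∪ (σ (k + 1)).m) : β ∈ (sprime σ k).p :=
  Word.mem_p_of_mulDef (h.2.1 k le_rfl) (h.2.2.2 (k + 1) le_rfl).1 (h.2.2.2 (k + 1) le_rfl).2 hβ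

section Snoc

variable {k : ℕ} (τ : Fin (k + 1) → Word E) (w : Word E)

lemma extend_snoc_of_le {i : ℕ} (hi : i ≤ k) : extend (Fin.snoc τ w) i = extend τ i := by
  have hi' : i < k + 1 := Nat.lt_succ_of_le hi
  simp only [extend, dif_pos hi', dif_pos (Nat.lt_succ_of_lt hi')]
  exact Fin.snoc_castSucc (α := fun _ => Word E) (i := ⟨i, hi'⟩) ..

lemma extend_snoc_last : extend (Fin.snoc τ w) (k + 1) = w := by
  simp only [extend, dif_pos (Nat.lt_succ_self _)]
  exact Fin.snoc_last (α := fun _ => Word E) ..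

lemma sprime_extend_snoc_of_le {i : ℕ} (hi : i ≤ k) :
    sprime (extend (Fin.snoc τ w)) i = sprime (extend τ) i :=
  sprime_congr fun _ hj => extend_snoc_of_le τ w (hj.trans hi)

lemma sprime_extend_snoc_last :
    sprime (extend (Fin.snoc τ w)) (k + 1) = wmul w (sprime (extend τ) k) := by
  rw [sprime, extend_snoc_last, sprime_extend_snoc_of_le τ w le_rfl]

variable {τ w}

lemma Adm.of_snoc (h : Adm (extend (Fin.snoc τ w)) (k + 1)) : Adm (extend τ) k :=
  h.of_succ.congr fun _ hi => extend_snoc_of_le τ w hi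

lemma Adm.snoc_nonempty (h : Adm (extend (Fin.snoc τ w)) (k + 1)) : (w.e ∪ w.m).Nonempty :=
  extend_snoc_last τ w ▸ h.2.2.1 (k + 1) (by omega) le_rfl

lemma Adm.snoc_mem_sprime_p (h : Adm (extend (Fin.snoc τ w)) (k + 1)) {β : E}
    (hβ : β ∈ w.e ∪ w.m) : β ∈ (sprime (extend τ) k).p :=
  sprime_extend_snoc_of_le τ w le_rfl ▸
    h.mem_sprime_p ((extend_snoc_last τ w).symm ▸ hβ)

lemma Adm.snoc_inter_nonempty (h : Adm (extend (Fin.snoc τ w)) (k + 1)) :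
    (w.S ∩ (sprime (extend τ) k).p).Nonempty := by
  obtain ⟨β, hβ⟩ := h.snoc_nonempty
  exact ⟨β, Finset.mem_inter.mpr ⟨Word.mem_S_of_mem_e_union_m hβ, h.snoc_mem_sprime_p hβ⟩⟩

end Snoc

def wordWeight (μ : ℝ) (O : Word E → Op Λ) (w : Word E) : ℝ :=
  opNorm (O w) * Real.exp (μ * (w.S.card : ℝ))

lemma wordWeight_nonneg (μ : ℝ) (O : Word E → Op Λ) (w : Word E) : 0 ≤ wordWeight μ O w :=
  mul_nonneg (norm_nonneg _) (Real.exp_pos _).le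

lemma sum_wordWeight_le_wordNorm (μ : ℝ) (O : Word E → Op Λ) (β : E) :
    ∑ w : Word E, (if β ∈ w.S then wordWeight μ O w else 0) ≤ wordNorm μ O :=
  le_ciSup (f := fun α => ∑ w : Word E, if α ∈ w.S then wordWeight μ O w else 0)
    (Finite.bddAbove_range _) β

lemma wordNorm_nonneg (μ : ℝ) (O : Word E → Op Λ) : 0 ≤ wordNorm μ O :=
  Real.iSup_nonneg fun _ => Finset.sum_nonneg fun w _ => ite_nonneg (wordWeight_nonneg μ O w) le_rfl

/-- Union bound over the anchoring set `P`. -/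
lemma sum_wordWeight_inter_nonempty_le (μ : ℝ) (O : Word E → Op Λ) (P : Finset E) :
    ∑ w : Word E, (if (w.S ∩ P).Nonempty then wordWeight μ O w else 0)
      ≤ P.card * wordNorm μ O := by
  have hunion : ∀ w : Word E, (if (w.S ∩ P).Nonempty then wordWeight μ O w else 0)
      ≤ ∑ β ∈ P, if β ∈ w.S then wordWeight μ O w else 0 := by
    intro w
    split_ifs with h
    · obtain ⟨β, hβ⟩ := h
      rw [Finset.mem_inter] at hβ
      simpa [if_pos hβ.1] using Finset.single_le_sum
        (f := fun β => if β ∈ w.S then wordWeight μ O w else 0)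
        (fun _ _ => ite_nonneg (wordWeight_nonneg μ O w) le_rfl) hβ.2
    · exact Finset.sum_nonneg fun _ _ => ite_nonneg (wordWeight_nonneg μ O w) le_rfl
  calc _ ≤ ∑ w : Word E, ∑ β ∈ P, if β ∈ w.S then wordWeight μ O w else 0 :=
        Finset.sum_le_sum fun w _ => hunion w
    _ = ∑ β ∈ P, ∑ w : Word E, if β ∈ w.S then wordWeight μ O w else 0 := Finset.sum_comm
    _ ≤ ∑ _β ∈ P, wordNorm μ O := Finset.sum_le_sum fun β _ => sum_wordWeight_le_wordNorm μ O β
    _ = P.card * wordNorm μ O := by rw [Finset.sum_const, nsmul_eq_mul]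

/-- The factor `(e^{−μ|S ∩ S'|}/|(𝐒𝐒')₊|)·d_𝐒` contributed to the weight by appending `𝐒` to a
sequence with running product `𝐒'`. -/
def stepFactor (D : Word E → Op Λ) (μ : ℝ) (w s : Word E) : ℝ :=
  Real.exp (-μ * ((w.S ∩ s.S).card : ℝ)) / ((wmul w s).p.card : ℝ) * wordWeight μ D w

lemma stepFactor_nonneg (D : Word E → Op Λ) (μ : ℝ) (w s : Word E) : 0 ≤ stepFactor D μ w s :=
  mul_nonneg (div_nonneg (Real.exp_pos _).le (Nat.cast_nonneg _)) (wordWeight_nonneg μ D w)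

lemma stepFactor_mul_card_le (D : Word E → Op Λ) {μ : ℝ} (hμ : 0 ≤ μ) (w s : Word E) :
    stepFactor D μ w s * (wmul w s).p.card ≤ wordWeight μ D w :=
  div_mul_mul_le_of_le_one
    (Real.exp_le_one_iff.mpr (by nlinarith [(w.S ∩ s.S).card.cast_nonneg (α := ℝ)]))
    (wordWeight_nonneg μ D w) (Nat.cast_nonneg _)

section Weights

variable (D V : Word E → Op Λ) (μ : ℝ)

lemma zw9_zero (σ : ℕ → Word E) :
    zw9 D V μ σ 0 = 1 / ((σ 0).p.card : ℝ) * wordWeight μ V (σ 0) := by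
  simp [zw9, sprime, wordWeight]

lemma zw9_succ (σ : ℕ → Word E) (k : ℕ) :
    zw9 D V μ σ (k + 1) = zw9 D V μ σ k * stepFactor D μ (σ (k + 1)) (sprime σ k) := by
  rw [zw9, zw9, Finset.prod_range_succ]
  exact (mul_assoc _ _ _).symm

lemma zw9_nonneg (σ : ℕ → Word E) (k : ℕ) : 0 ≤ zw9 D V μ σ k := by
  induction k with
  | zero => rw [zw9_zero]; exact mul_nonneg (by positivity) (wordWeight_nonneg μ V _)
  | succ k ih => rw [zw9_succ]; exact mul_nonneg ih (stepFactor_nonneg D μ _ _)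

lemma zw9_congr {σ σ' : ℕ → Word E} {k : ℕ} (h : ∀ i ≤ k, σ i = σ' i) :
    zw9 D V μ σ k = zw9 D V μ σ' k := by
  induction k with
  | zero => rw [zw9_zero, zw9_zero, h 0 le_rfl]
  | succ k ih =>
    rw [zw9_succ, zw9_succ, ih fun i hi => h i (hi.trans k.le_succ), h (k + 1) le_rfl,
      sprime_congr fun i hi => h i (hi.trans k.le_succ)]

/-- Through the junk value `1 / 0 = 0` of the normalisation. -/
lemma zw9_eq_zero_of_card_eq_zero {σ : ℕ → Word E} {k : ℕ} (h : (sprime σ k).p.card = 0) :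
    zw9 D V μ σ k = 0 := by
  cases k with
  | zero => simp [zw9_zero, show (σ 0).p.card = 0 from h]
  | succ k => simp [zw9_succ, stepFactor, show (wmul (σ (k + 1)) (sprime σ k)).p.card = 0 from h]

lemma zw9_le_mul_card (σ : ℕ → Word E) (k : ℕ) :
    zw9 D V μ σ k ≤ zw9 D V μ σ k * (sprime σ k).p.card := by
  rcases Nat.eq_zero_or_pos (sprime σ k).p.card with h | h
  · simp [zw9_eq_zero_of_card_eq_zero D V μ h]
  · exact le_mul_of_one_le_right (zw9_nonneg D V μ σ k) (by exact_mod_cast h)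

def zw9Scaled (σ : ℕ → Word E) (k : ℕ) : ℝ :=
  zw9 D V μ σ k * (sprime σ k).p.card

def z9kjScaled (k j : ℕ) : ℝ :=
  ⨆ α : E, ∑ σ : Fin (k + 1) → Word E,
    (if Adm (extend σ) k ∧ α ∈ (extend σ j).S then zw9Scaled D V μ (extend σ) k else 0)

lemma z9_nonneg (k : ℕ) : 0 ≤ z9 D V μ k :=
  Real.iSup_nonneg fun _ => Finset.sum_nonneg fun _ _ => ite_nonneg (zw9_nonneg D V μ _ _) le_rfl

lemma z9kjScaled_nonneg (k j : ℕ) : 0 ≤ z9kjScaled D V μ k j :=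
  Real.iSup_nonneg fun _ => Finset.sum_nonneg fun _ _ =>
    ite_nonneg (mul_nonneg (zw9_nonneg D V μ _ _) (Nat.cast_nonneg _)) le_rfl

lemma sum_le_z9 (k : ℕ) (α : E) :
    ∑ σ : Fin (k + 1) → Word E,
        (if Adm (extend σ) k ∧ α ∈ (sprime (extend σ) k).S then zw9 D V μ (extend σ) k else 0)
      ≤ z9 D V μ k :=
  le_ciSup (f := fun α => ∑ σ : Fin (k + 1) → Word E,
    (if Adm (extend σ) k ∧ α ∈ (sprime (extend σ) k).S then zw9 D V μ (extend σ) k else 0))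
    (Finite.bddAbove_range _) α

lemma sum_le_z9kjScaled (k j : ℕ) (α : E) :
    ∑ σ : Fin (k + 1) → Word E,
        (if Adm (extend σ) k ∧ α ∈ (extend σ j).S then zw9Scaled D V μ (extend σ) k else 0)
      ≤ z9kjScaled D V μ k j :=
  le_ciSup (f := fun α => ∑ σ : Fin (k + 1) → Word E,
    (if Adm (extend σ) k ∧ α ∈ (extend σ j).S then zw9Scaled D V μ (extend σ) k else 0))
    (Finite.bddAbove_range _) α

lemma z9kj_le_z9kjScaled (k j : ℕ) : z9kj D V μ k j ≤ z9kjScaled D V μ k j :=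
  ciSup_mono (Finite.bddAbove_range _) fun _ => Finset.sum_le_sum fun _ _ =>
    ite_le_ite_of_imp id (fun _ => zw9_le_mul_card D V μ _ k)
      (mul_nonneg (zw9_nonneg D V μ _ _) (Nat.cast_nonneg _))

variable {D V μ}

lemma zw9Scaled_snoc_le (hμ : 0 ≤ μ) {k : ℕ} (τ : Fin (k + 1) → Word E) (w : Word E) :
    zw9Scaled D V μ (extend (Fin.snoc τ w)) (k + 1)
      ≤ zw9 D V μ (extend τ) k * wordWeight μ D w := by
  rw [zw9Scaled, zw9_succ, zw9_congr D V μ fun _ hi => extend_snoc_of_le τ w hi,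
    extend_snoc_last, sprime_extend_snoc_last, sprime_extend_snoc_of_le τ w le_rfl, mul_assoc]
  exact mul_le_mul_of_nonneg_left (stepFactor_mul_card_le D hμ w _) (zw9_nonneg D V μ _ k)

lemma z9kjScaled_succ_le (hμ : 0 ≤ μ) {k j : ℕ} (hj : j ≤ k) :
    z9kjScaled D V μ (k + 1) j ≤ z9kjScaled D V μ k j * wordNorm μ D := by
  have hτ : ∀ (α : E) (τ : Fin (k + 1) → Word E),
      ∑ w : Word E, (if Adm (extend (Fin.snoc τ w)) (k + 1) ∧ α ∈ (extend (Fin.snoc τ w) j).S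
          then zw9Scaled D V μ (extend (Fin.snoc τ w)) (k + 1) else 0)
        ≤ (if Adm (extend τ) k ∧ α ∈ (extend τ j).S then zw9Scaled D V μ (extend τ) k else 0)
          * wordNorm μ D := by
    intro α τ
    set P := (sprime (extend τ) k).p
    calc _ ≤ ∑ w : Word E,
            (if Adm (extend τ) k ∧ α ∈ (extend τ j).S then zw9 D V μ (extend τ) k else 0) *
              (if (w.S ∩ P).Nonempty then wordWeight μ D w else 0) := by
          refine Finset.sum_le_sum fun w _ => ?_
          rw [ite_zero_mul_ite_zero]
          refine ite_le_ite_of_imp (fun ⟨hA, hα⟩ => ⟨⟨hA.of_snoc, ?_⟩, hA.snoc_inter_nonempty⟩)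
            (fun _ => zw9Scaled_snoc_le hμ τ w)
            (mul_nonneg (zw9_nonneg D V μ _ k) (wordWeight_nonneg μ D w))
          rwa [extend_snoc_of_le τ w hj] at hα
      _ ≤ (if Adm (extend τ) k ∧ α ∈ (extend τ j).S then zw9 D V μ (extend τ) k else 0) *
            (P.card * wordNorm μ D) := by
          rw [← Finset.mul_sum]
          exact mul_le_mul_of_nonneg_left (sum_wordWeight_inter_nonempty_le μ D P)
            (ite_nonneg (zw9_nonneg D V μ _ k) le_rfl)
      _ = _ := by
          unfold zw9Scaled
          split_ifs <;> ring
  refine Real.iSup_le (fun α => ?_)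
    (mul_nonneg (z9kjScaled_nonneg D V μ k j) (wordNorm_nonneg μ D))
  rw [sum_tuple_snoc]
  refine (Finset.sum_le_sum fun τ _ => hτ α τ).trans ?_
  rw [← Finset.sum_mul]
  exact mul_le_mul_of_nonneg_right (sum_le_z9kjScaled D V μ k j α) (wordNorm_nonneg μ D)

lemma z9kjScaled_le_pow (hμ : 0 ≤ μ) {k j : ℕ} (hjk : j ≤ k) :
    z9kjScaled D V μ k j ≤ z9kjScaled D V μ j j * wordNorm μ D ^ (k - j) := by
  induction k, hjk using Nat.le_induction with
  | base => simp
  | succ n hjn ih =>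
    calc z9kjScaled D V μ (n + 1) j ≤ z9kjScaled D V μ n j * wordNorm μ D :=
          z9kjScaled_succ_le hμ hjn
      _ ≤ z9kjScaled D V μ j j * wordNorm μ D ^ (n - j) * wordNorm μ D :=
          mul_le_mul_of_nonneg_right ih (wordNorm_nonneg μ D)
      _ = z9kjScaled D V μ j j * wordNorm μ D ^ (n + 1 - j) := by
          rw [Nat.sub_add_comm hjn, pow_succ, mul_assoc]

lemma z9kjScaled_succ_self_le (hμ : 0 ≤ μ) (m : ℕ) :
    z9kjScaled D V μ (m + 1) (m + 1) ≤ z9 D V μ m * wordNorm μ D := by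
  have hw : ∀ (α : E) (w : Word E),
      ∑ τ : Fin (m + 1) → Word E,
          (if Adm (extend (Fin.snoc τ w)) (m + 1) ∧ α ∈ (extend (Fin.snoc τ w) (m + 1)).S
            then zw9Scaled D V μ (extend (Fin.snoc τ w)) (m + 1) else 0)
        ≤ z9 D V μ m * if α ∈ w.S then wordWeight μ D w else 0 := by
    intro α w
    by_cases hem : (w.e ∪ w.m).Nonempty
    · obtain ⟨β, hβ⟩ := hem
      calc _ ≤ ∑ τ : Fin (m + 1) → Word E,
              (if Adm (extend τ) m ∧ β ∈ (sprime (extend τ) m).S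
                then zw9 D V μ (extend τ) m else 0) *
              (if α ∈ w.S then wordWeight μ D w else 0) := by
            refine Finset.sum_le_sum fun τ _ => ?_
            rw [ite_zero_mul_ite_zero]
            refine ite_le_ite_of_imp (fun ⟨hA, hα⟩ => ⟨⟨hA.of_snoc,
                Word.mem_S_of_mem_p (hA.snoc_mem_sprime_p hβ)⟩, extend_snoc_last τ w ▸ hα⟩)
              (fun _ => zw9Scaled_snoc_le hμ τ w)
              (mul_nonneg (zw9_nonneg D V μ _ m) (wordWeight_nonneg μ D w))
        _ ≤ _ := by
            rw [← Finset.sum_mul]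
            exact mul_le_mul_of_nonneg_right (sum_le_z9 D V μ m β)
              (ite_nonneg (wordWeight_nonneg μ D w) le_rfl)
    · rw [Finset.sum_eq_zero fun τ _ => if_neg fun ⟨hA, _⟩ => hem hA.snoc_nonempty]
      exact mul_nonneg (z9_nonneg D V μ m) (ite_nonneg (wordWeight_nonneg μ D w) le_rfl)
  refine Real.iSup_le (fun α => ?_) (mul_nonneg (z9_nonneg D V μ m) (wordNorm_nonneg μ D))
  rw [sum_tuple_snoc, Finset.sum_comm]
  refine (Finset.sum_le_sum fun w _ => hw α w).trans ?_
  rw [← Finset.mul_sum]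
  exact mul_le_mul_of_nonneg_left (sum_wordWeight_le_wordNorm μ D α) (z9_nonneg D V μ m)

lemma z9kjScaled_zero_zero_le : z9kjScaled D V μ 0 0 ≤ wordNorm μ V := by
  refine Real.iSup_le (fun α => ?_) (wordNorm_nonneg μ V)
  rw [← (Equiv.funUnique (Fin 1) (Word E)).symm.sum_comp]
  refine (Finset.sum_le_sum fun w _ => ?_).trans (sum_wordWeight_le_wordNorm μ V α)
  have hw : extend ((Equiv.funUnique (Fin 1) (Word E)).symm w) 0 = w := rfl
  refine ite_le_ite_of_imp (fun h => hw ▸ h.2) (fun _ => ?_) (wordWeight_nonneg μ V w)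
  rw [zw9Scaled, zw9_zero, sprime, hw]
  exact div_mul_mul_le_of_le_one le_rfl (wordWeight_nonneg μ V w) (Nat.cast_nonneg _)

end Weights

theorem generator_combinatorial_bound_general
    (D V : Word E → Op Λ)
    (μ : ℝ) (hμ : 1 < μ) :
    (∀ k j : ℕ, 0 < j → j ≤ k →
        z9kj D V μ k j ≤ z9 D V μ (j - 1) * wordNorm μ D ^ (k - j + 1)) ∧
      (∀ k : ℕ, z9kj D V μ k 0 ≤ wordNorm μ D ^ k * wordNorm μ V) := by
  have hμ0 : 0 ≤ μ := by linarith
  have hD := wordNorm_nonneg μ D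
  refine ⟨fun k j hj hjk => ?_, fun k => ?_⟩
  · obtain ⟨m, rfl⟩ : ∃ m, j = m + 1 := ⟨j - 1, by omega⟩
    calc z9kj D V μ k (m + 1) ≤ z9kjScaled D V μ k (m + 1) := z9kj_le_z9kjScaled D V μ k _
      _ ≤ z9kjScaled D V μ (m + 1) (m + 1) * wordNorm μ D ^ (k - (m + 1)) :=
          z9kjScaled_le_pow hμ0 hjk
      _ ≤ z9 D V μ m * wordNorm μ D * wordNorm μ D ^ (k - (m + 1)) :=
          mul_le_mul_of_nonneg_right (z9kjScaled_succ_self_le hμ0 m) (pow_nonneg hD _)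
      _ = z9 D V μ (m + 1 - 1) * wordNorm μ D ^ (k - (m + 1) + 1) := by
          rw [Nat.add_sub_cancel, mul_assoc, ← pow_succ']
  · calc z9kj D V μ k 0 ≤ z9kjScaled D V μ k 0 := z9kj_le_z9kjScaled D V μ k 0
      _ ≤ z9kjScaled D V μ 0 0 * wordNorm μ D ^ k := z9kjScaled_le_pow hμ0 k.zero_le
      _ ≤ wordNorm μ V * wordNorm μ D ^ k :=
          mul_le_mul_of_nonneg_right z9kjScaled_zero_zero_le (pow_nonneg hD _)
      _ = wordNorm μ D ^ k * wordNorm μ V := mul_comm _ _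

/-- **Combinatorial lemma for the locality of the generator `A`.**
For admissible sequences built from the collections `D` (non-frustration-free words) and `V⁺`
(purely raising words), and `μ > 1`: for `0 < j ≤ k` one has
`z_{k,j} ≤ z(j−1)·‖D‖_μ^{k−j+1}`, and `z_{k,0} ≤ ‖D‖_μ^k ‖V⁺‖_μ`. -/
theorem generator_combinatorial_bound (K : Checks Λ E)
    (D V : Word E → Op Λ) (hDcoll : IsColl K D) (hVcoll : IsColl K V)
    (hD : ∀ w : Word E, D w ≠ 0 → (w.e ∪ w.m).Nonempty ∧ (w.e ∪ w.p).Nonempty)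
    (hV : ∀ w : Word E, V w ≠ 0 → w.e = ∅ ∧ w.m = ∅ ∧ w.p.Nonempty)
    (μ : ℝ) (hμ : 1 < μ) :
    (∀ k j : ℕ, 0 < j → j ≤ k →
        z9kj D V μ k j ≤ z9 D V μ (j - 1) * wordNorm μ D ^ (k - j + 1)) ∧
      (∀ k : ℕ, z9kj D V μ k 0 ≤ wordNorm μ D ^ k * wordNorm μ V) :=
  generator_combinatorial_bound_general D V μ hμ

end Stmt9

end QLDPC
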